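/- arXiv:2411.06416 — 8 statements merged into one kernel-verified Lean document; each statement's English description precedes it below -/
import Mathlib

section
/- Reversibility collapse: if the relation p is reversible (each final state has at most one predecessor: ∀σ σ' τ, (σ,τ) ∈ p → (σ',τ) ∈ p → σ = σ'), then asp(p,b) = dsp(p,b) and aslp(p,b) = dslp(p,b) for every precondition b ⊆ Σ. -/
variable {S : Type*}

def awp (p : Set (S × S)) (c : Set S) : Set S := {σ | ∃ τ, τ ∈ c ∧ (σ, τ) ∈ p}
def dwlp (p : Set (S × S)) (c : Set S) : Set S := {σ | ∀ τ, (σ, τ) ∈ p → τ ∈ c}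
def asp (p : Set (S × S)) (b : Set S) : Set S := {τ | ∃ σ, σ ∈ b ∧ (σ, τ) ∈ p}
def dslp (p : Set (S × S)) (b : Set S) : Set S := {τ | ∀ σ, (σ, τ) ∈ p → σ ∈ b}
def dsp (p : Set (S × S)) (b : Set S) : Set S := {τ | (∃ σ, (σ, τ) ∈ p) ∧ ∀ σ, (σ, τ) ∈ p → σ ∈ b}
def aslp (p : Set (S × S)) (b : Set S) : Set S := {τ | (∃ σ, σ ∈ b ∧ (σ, τ) ∈ p) ∨ ∀ σ, (σ, τ) ∉ p}

theorem stmt12 (p : Set (S × S))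
    (hrev : ∀ σ σ' τ : S, (σ, τ) ∈ p → (σ', τ) ∈ p → σ = σ') (b : Set S) :
    asp p b = dsp p b ∧ aslp p b = dslp p b := by
  constructor
  · ext τ
    constructor
    · rintro ⟨σ, hb, hp⟩
      exact ⟨⟨σ, hp⟩, fun σ' hp' => (hrev σ' σ τ hp' hp) ▸ hb⟩
    · rintro ⟨⟨σ, hp⟩, h⟩
      exact ⟨σ, h σ hp, hp⟩
  · ext τ
    constructor
    · rintro (⟨σ, hb, hp⟩ | h) σ' hp'
      · exact (hrev σ' σ τ hp' hp) ▸ hb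
      · exact absurd hp' (h σ')
    · intro h
      by_cases he : ∃ σ, (σ, τ) ∈ p
      · obtain ⟨σ, hp⟩ := he
        exact Or.inl ⟨σ, h σ hp, hp⟩
      · exact Or.inr fun σ hp => he ⟨σ, hp⟩
end

section
/- Branching divergence collapse: if each initial state either always diverges or always terminates (formally ∀σ, σ ∈ D → ¬∃τ, (σ,τ) ∈ p), and every state either diverges or has a successor (∀σ, σ ∈ D ∨ ∃τ, (σ,τ) ∈ p), then dwp(p,c) = awp(p,c) ∩ dwlp(p,c) and awlp(p,c) = awp(p,c) ∪ dwlp(p,c) for all c ⊆ Σ. -/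
variable {S : Type*}

def dwp (p : Set (S × S)) (D : Set S) (c : Set S) : Set S :=
  {σ | σ ∉ D ∧ ∀ τ, (σ, τ) ∈ p → τ ∈ c}
def awlp (p : Set (S × S)) (D : Set S) (c : Set S) : Set S :=
  {σ | σ ∈ D ∨ ∃ τ, τ ∈ c ∧ (σ, τ) ∈ p}

theorem stmt13 (p : Set (S × S)) (D : Set S)
    (hnb : ∀ σ : S, σ ∈ D → ¬∃ τ, (σ, τ) ∈ p)
    (hcons : ∀ σ : S, σ ∈ D ∨ ∃ τ, (σ, τ) ∈ p) (c : Set S) :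
    dwp p D c = awp p c ∩ dwlp p c ∧ awlp p D c = awp p c ∪ dwlp p c := by
  constructor
  · ext σ
    simp only [dwp, awp, dwlp, Set.mem_setOf_eq, Set.mem_inter_iff]
    constructor
    · rintro ⟨hD, h⟩
      rcases hcons σ with h'|⟨τ, hτ⟩
      · exact absurd h' hD
      · exact ⟨⟨τ, h τ hτ, hτ⟩, h⟩
    · rintro ⟨⟨τ, _, hτ⟩, h⟩
      exact ⟨fun hD => hnb σ hD ⟨τ, hτ⟩, h⟩
  · ext σ
    simp only [awlp, awp, dwlp, Set.mem_setOf_eq, Set.mem_union]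
    constructor
    · rintro (hD | h)
      · exact Or.inr fun τ hτ => absurd ⟨τ, hτ⟩ (hnb σ hD)
      · exact Or.inl h
    · rintro (h | h)
      · exact Or.inr h
      · rcases hcons σ with hD|⟨τ, hτ⟩
        · exact Or.inl hD
        · exact Or.inr ⟨τ, h τ hτ, hτ⟩
end

section
/- In the relational model, the TopKAT equation for Lisbon logic characterizes angelic total correctness: for relations b, c arising from predicates B, C ⊆ Σ (i.e., b = {(σ,σ) | σ ∈ B}, c = {(τ,τ) | τ ∈ C}) and any relation p ⊆ Σ × Σ, one has (b ∘ p ∘ c) ∘ ⊤ = b ∘ ⊤ if and only if B ⊆ awp(p,C), where ⊤ = Σ × Σ is the universal relation and ∘ is relational composition. -/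
variable {S : Type*}

def comp (r s : Set (S × S)) : Set (S × S) := {x | ∃ ρ, (x.1, ρ) ∈ r ∧ (ρ, x.2) ∈ s}
def test (B : Set S) : Set (S × S) := {x | x.1 = x.2 ∧ x.1 ∈ B}
def top (S : Type*) : Set (S × S) := Set.univ

theorem stmt14 (p : Set (S × S)) (B C : Set S) :
    comp (comp (comp (test B) p) (test C)) (top S) = comp (test B) (top S) ↔
      B ⊆ awp p C := by
  constructor
  · intro h σ hσ
    have hm : (σ, σ) ∈ comp (test B) (top S) := ⟨σ, ⟨rfl, hσ⟩, trivial⟩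
    rw [← h] at hm
    obtain ⟨ρ, ⟨ρ', ⟨ρ'', ⟨he, hb⟩, hp⟩, he', hc⟩, -⟩ := hm
    simp only at he he' hc hp hb
    subst he; subst he'
    exact ⟨_, hc, hp⟩
  · intro h
    ext ⟨σ, τ⟩
    constructor
    · rintro ⟨ρ, ⟨ρ', ⟨ρ'', ⟨he, hb⟩, -⟩, -, -⟩, -⟩
      simp only at he hb
      subst he
      exact ⟨σ, ⟨rfl, hb⟩, trivial⟩
    · rintro ⟨ρ, ⟨he, hb⟩, -⟩
      simp only at he hb
      subst he
      obtain ⟨τ', hc, hp⟩ := h hb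
      exact ⟨τ', ⟨τ', ⟨σ, ⟨rfl, hb⟩, hp⟩, rfl, hc⟩, trivial⟩
end

section
/- In the relational model, the TopKAT equation for partial correctness holds: for predicates B, C ⊆ Σ with associated test relations b, c and any relation p, one has ⊤ ∘ (b ∘ p ∘ c) = ⊤ ∘ (b ∘ p) if and only if B ⊆ dwlp(p,C). -/
variable {S : Type*}

theorem stmt15 [Nonempty S] (p : Set (S × S)) (B C : Set S) :
    comp (top S) (comp (comp (test B) p) (test C)) = comp (top S) (comp (test B) p) ↔
      B ⊆ dwlp p C := by
  simp only [Set.ext_iff, comp, test, top, dwlp, Set.mem_setOf_eq, Set.mem_univ, true_and,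
    Prod.forall, Set.subset_def]
  constructor
  · intro h σ hB τ hp
    obtain ⟨ρ, ρ1, ⟨ρ2, ⟨h1, h2⟩, h3⟩, h4, h5⟩ := (h σ τ).2 ⟨σ, σ, ⟨rfl, hB⟩, hp⟩
    exact h4 ▸ h5
  · intro h x τ
    constructor
    · rintro ⟨ρ, ρ1, ⟨ρ2, ⟨heq, hB⟩, hp⟩, heq2, -⟩
      exact ⟨ρ, ρ2, ⟨heq, hB⟩, heq2 ▸ hp⟩
    · rintro ⟨ρ, ρ1, ⟨heq, hB⟩, hp⟩
      exact ⟨ρ, τ, ⟨ρ1, ⟨heq, hB⟩, hp⟩, rfl, h ρ1 (heq ▸ hB) τ hp⟩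
end

section
/- In the relational model, the TopKAT equation for incorrectness logic holds: ⊤ ∘ (b ∘ p ∘ c) = ⊤ ∘ c if and only if C ⊆ asp(p,B). -/
variable {S : Type*}

theorem stmt16 [Nonempty S] (p : Set (S × S)) (B C : Set S) :
    comp (top S) (comp (comp (test B) p) (test C)) = comp (top S) (test C) ↔
      C ⊆ asp p B := by
  simp only [comp, test, top, asp, Set.mem_setOf_eq, Set.mem_univ, true_and, Set.ext_iff]
  constructor
  · intro h τ hτ
    obtain ⟨ρ, ρ', ⟨σ, ⟨rfl, hB⟩, hp⟩, heq, hC⟩ := (h (τ, τ)).2 ⟨τ, rfl, hτ⟩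
    subst heq
    exact ⟨ρ, hB, hp⟩
  · intro h x
    constructor
    · rintro ⟨ρ, ρ', ⟨σ, ⟨rfl, hB⟩, hp⟩, heq, hC⟩
      exact ⟨x.2, rfl, heq ▸ hC⟩
    · rintro ⟨ρ, rfl, hC⟩
      obtain ⟨σ, hB, hp⟩ := h hC
      exact ⟨σ, x.2, ⟨σ, ⟨rfl, hB⟩, hp⟩, rfl, hC⟩
end

section
/- In the relational model, the TopKAT equation for angelic partial incorrectness holds: ⊤ ∘ (b ∘ p ∘ c) = ⊤ ∘ (p ∘ c) if and only if C ⊆ aslp(p,B). -/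
variable {S : Type*}

theorem stmt17 [Nonempty S] (p : Set (S × S)) (B C : Set S) :
    comp (top S) (comp (comp (test B) p) (test C)) = comp (top S) (comp p (test C)) ↔
      C ⊆ aslp p B := by
  constructor
  · intro h τ hτ
    by_cases hp : ∃ σ, (σ, τ) ∈ p
    · obtain ⟨σ, hσ⟩ := hp
      have hm : (τ, τ) ∈ comp (top S) (comp p (test C)) :=
        ⟨σ, trivial, τ, hσ, rfl, hτ⟩
      rw [← h] at hm
      obtain ⟨ρ, -, ρ2, ⟨ρ3, ⟨he1, hB⟩, hp3⟩, he2, -⟩ := hm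
      simp only at he1 he2 hp3 hB
      subst he1; subst he2
      exact Or.inl ⟨ρ, hB, hp3⟩
    · exact Or.inr (fun σ hσ => hp ⟨σ, hσ⟩)
  · intro h
    ext ⟨x, y⟩
    constructor
    · rintro ⟨ρ, -, ρ2, ⟨ρ3, ⟨he1, hB⟩, hp3⟩, he2, hC⟩
      exact ⟨ρ, trivial, ρ2, he1 ▸ hp3, he2, hC⟩
    · rintro ⟨σ, -, ρ, hpρ, he2, hC⟩
      simp only at he2 hpρ hC
      subst he2
      rcases h hC with ⟨σ', hB, hp'⟩ | hn
      · exact ⟨σ', trivial, ρ, ⟨σ', ⟨rfl, hB⟩, hp'⟩, rfl, hC⟩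
      · exact absurd hpρ (hn σ)
end

section
/- In the relational model, the TopKAT equation for demonic partial incorrectness holds: (b ∘ p ∘ c) ∘ ⊤ = (p ∘ c) ∘ ⊤ if and only if C ⊆ dslp(p,B). -/
variable {S : Type*}

theorem stmt18 [Nonempty S] (p : Set (S × S)) (B C : Set S) :
    comp (comp (comp (test B) p) (test C)) (top S) = comp (comp p (test C)) (top S) ↔
      C ⊆ dslp p B := by
  constructor
  · intro h τ hτ σ hσ
    have hr : (σ, τ) ∈ comp (comp p (test C)) (top S) :=
      ⟨τ, ⟨τ, hσ, rfl, hτ⟩, trivial⟩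
    rw [← h] at hr
    obtain ⟨ρ, ⟨ρ', ⟨ρ'', ⟨he, hB⟩, hp⟩, _⟩, _⟩ := hr
    cases he; exact hB
  · intro h
    ext ⟨σ, τ'⟩
    constructor
    · rintro ⟨ρ, ⟨ρ', ⟨ρ'', ⟨he, _⟩, hp⟩, he2, hC⟩, _⟩
      cases he; cases he2
      exact ⟨ρ, ⟨ρ, hp, rfl, hC⟩, trivial⟩
    · rintro ⟨ρ, ⟨ρ', hp, he, hC⟩, _⟩
      cases he
      have hB : σ ∈ B := h hC σ hp
      exact ⟨ρ, ⟨ρ, ⟨σ, ⟨rfl, hB⟩, hp⟩, rfl, hC⟩, trivial⟩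
end

section
/- In the relational model, the 'in-between' TopKAT equation characterizes underapproximation of awp ∪ dwlp: (b ∘ p ∘ c) ∘ ⊤ = (b ∘ p) ∘ ⊤ if and only if B ⊆ awp(p,C) ∪ dwlp(p,C), where dwlp here is the relational version {σ | ∀τ, (σ,τ) ∈ p → τ ∈ C} and awp(p,C) = {σ | ∃τ ∈ C, (σ,τ) ∈ p}. -/
variable {S : Type*}

theorem stmt19 [Nonempty S] (p : Set (S × S)) (B C : Set S) :
    comp (comp (comp (test B) p) (test C)) (top S) = comp (comp (test B) p) (top S) ↔
      B ⊆ awp p C ∪ dwlp p C := by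
  constructor
  · intro h σ hσ
    by_cases hs : ∃ ρ, (σ, ρ) ∈ p
    · obtain ⟨ρ, hρ⟩ := hs
      have : (σ, ρ) ∈ comp (comp (test B) p) (top S) :=
        ⟨ρ, ⟨σ, ⟨rfl, hσ⟩, hρ⟩, trivial⟩
      rw [← h] at this
      obtain ⟨ρ', ⟨ρ'', ⟨σ', ⟨hσ'1, hσ'2⟩, hp⟩, hc1, hc2⟩, -⟩ := this
      left
      exact ⟨ρ'', by simpa [hc1] using hc2, by rw [show σ = σ' from hσ'1]; exact hp⟩
    · right
      intro τ hτ
      exact absurd ⟨τ, hτ⟩ hs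
  · intro h
    ext ⟨σ, τ⟩
    constructor
    · rintro ⟨ρ, ⟨ρ', ⟨σ', ⟨hσ'1, hσ'2⟩, hp⟩, hc1, hc2⟩, -⟩
      exact ⟨ρ', ⟨σ', ⟨hσ'1, hσ'2⟩, hp⟩, trivial⟩
    · rintro ⟨ρ, ⟨σ', ⟨hσ'1, hσ'2⟩, hp⟩, -⟩
      obtain rfl : σ = σ' := hσ'1
      rcases h (by exact hσ'2) with ⟨ρ', hρ'C, hρ'p⟩ | hd
      · exact ⟨ρ', ⟨ρ', ⟨σ, ⟨rfl, hσ'2⟩, hρ'p⟩, rfl, hρ'C⟩, trivial⟩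
      · exact ⟨ρ, ⟨ρ, ⟨σ, ⟨rfl, hσ'2⟩, hp⟩, rfl, hd ρ hp⟩, trivial⟩
end
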